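/- arXiv:1408.1767 — 2 statements merged into one kernel-verified Lean document; each statement's English description precedes it below -/
import Mathlib

section
/- Fix ε ∈ (0,1), β ∈ (0,1), m ∈ ℕ, and ℓ ∈ ℕ. If n ≥ (2/ε)·(ln(m/β) + ℓ), then m·Σ_{i=0}^{ℓ−1} C(n,i)·ε^i·(1−ε)^{n−i} ≤ β, where C(n,i) is the binomial coefficient. -/
/-!
Tilting by `1/2`: for `i < ℓ` we have `ε ^ i ≤ 2 ^ ℓ (ε / 2) ^ i`, so the lower tail is at most
`2 ^ ℓ` times a truncation of the binomial expansion of `(ε / 2 + (1 - ε)) ^ n = (1 - ε / 2) ^ n`.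
With `2 ≤ e` and `1 - x ≤ e ^ (-x)` this gives `m · tail ≤ m · e ^ (ℓ - ε n / 2)`, and the
hypothesis on `n` says exactly that the exponent is at most `log (β / m)`.
-/

open Finset Real

theorem sum_range_choose_mul_pow_le_add_pow {R : Type*} [CommSemiring R] [PartialOrder R]
    [IsOrderedRing R] {a b : R} (ha : 0 ≤ a) (hb : 0 ≤ b) (n ℓ : ℕ) :
    ∑ i ∈ range ℓ, (n.choose i : R) * a ^ i * b ^ (n - i) ≤ (a + b) ^ n := by
  have hterm_nonneg : ∀ i, 0 ≤ (n.choose i : R) * a ^ i * b ^ (n - i) := fun i => by positivity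
  rw [add_pow]
  calc ∑ i ∈ range ℓ, (n.choose i : R) * a ^ i * b ^ (n - i)
      = ∑ i ∈ range ℓ ∩ range (n + 1), (n.choose i : R) * a ^ i * b ^ (n - i) := by
        refine (sum_subset inter_subset_left fun i hi hni => ?_).symm
        have hni : n < i := by simp_all
        simp [Nat.choose_eq_zero_of_lt hni]
    _ ≤ ∑ i ∈ range (n + 1), (n.choose i : R) * a ^ i * b ^ (n - i) :=
        sum_le_sum_of_subset_of_nonneg inter_subset_right fun i _ _ => hterm_nonneg i
    _ = ∑ i ∈ range (n + 1), a ^ i * b ^ (n - i) * (n.choose i : R) :=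
        sum_congr rfl fun i _ => by ring

theorem pow_mul_sum_range_binomial_le {p t : ℝ} (hp₀ : 0 ≤ p) (hp₁ : p ≤ 1) (ht₀ : 0 ≤ t)
    (ht₁ : t ≤ 1) (n ℓ : ℕ) :
    t ^ ℓ * ∑ i ∈ range ℓ, (n.choose i : ℝ) * p ^ i * (1 - p) ^ (n - i)
      ≤ (t * p + (1 - p)) ^ n := by
  refine le_trans ?_ (sum_range_choose_mul_pow_le_add_pow (by positivity) (by linarith) n ℓ)
  rw [mul_sum]
  refine sum_le_sum fun i hi => ?_
  have htilt : t ^ ℓ ≤ t ^ i := pow_le_pow_of_le_one ht₀ ht₁ (mem_range.mp hi).le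
  have hq : 0 ≤ (1 - p) ^ (n - i) := pow_nonneg (by linarith) _
  calc t ^ ℓ * ((n.choose i : ℝ) * p ^ i * (1 - p) ^ (n - i))
      ≤ t ^ i * ((n.choose i : ℝ) * p ^ i * (1 - p) ^ (n - i)) := by gcongr
    _ = (n.choose i : ℝ) * (t * p) ^ i * (1 - p) ^ (n - i) := by ring

theorem two_pow_mul_one_sub_half_pow_le_exp {ε : ℝ} (hε : ε ≤ 2) (ℓ n : ℕ) :
    2 ^ ℓ * (1 - ε / 2) ^ n ≤ exp (ℓ - ε * n / 2) := by
  have htwo : (2 : ℝ) ≤ exp 1 := by linarith [add_one_le_exp 1]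
  have hbase : 0 ≤ 1 - ε / 2 := by linarith
  calc (2 : ℝ) ^ ℓ * (1 - ε / 2) ^ n ≤ exp 1 ^ ℓ * exp (-(ε / 2)) ^ n := by
        gcongr
        exact one_sub_le_exp_neg _
    _ = exp (ℓ - ε * n / 2) := by
        rw [← exp_nat_mul, ← exp_nat_mul, ← exp_add]
        ring_nf

theorem stmt_12 (ε β : ℝ) (hε : ε ∈ Set.Ioo (0 : ℝ) 1) (hβ : β ∈ Set.Ioo (0 : ℝ) 1)
    (m ℓ n : ℕ) (hn : (n : ℝ) ≥ (2 / ε) * (Real.log (m / β) + ℓ)) :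
    (m : ℝ) * ∑ i ∈ Finset.range ℓ, (n.choose i : ℝ) * ε ^ i * (1 - ε) ^ (n - i) ≤ β := by
  obtain ⟨hε₀, hε₁⟩ := hε
  obtain ⟨hβ₀, -⟩ := hβ
  rcases (Nat.cast_nonneg m : (0 : ℝ) ≤ m).eq_or_lt with hm | hm
  · rw [← hm, zero_mul]
    exact hβ₀.le
  have htail : ∑ i ∈ range ℓ, (n.choose i : ℝ) * ε ^ i * (1 - ε) ^ (n - i)
      ≤ 2 ^ ℓ * (1 - ε / 2) ^ n := by
    have h := pow_mul_sum_range_binomial_le hε₀.le hε₁.le one_half_pos.le one_half_lt_one.le n ℓ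
    rw [one_div, inv_pow, inv_mul_le_iff₀ (by positivity)] at h
    exact h.trans_eq (by ring)
  have hexponent : (ℓ : ℝ) - ε * n / 2 ≤ log (β / m) := by
    rw [ge_iff_le, div_mul_eq_mul_div, div_le_iff₀ hε₀, log_div hm.ne' hβ₀.ne'] at hn
    rw [log_div hβ₀.ne' hm.ne']
    linarith
  calc (m : ℝ) * ∑ i ∈ range ℓ, (n.choose i : ℝ) * ε ^ i * (1 - ε) ^ (n - i)
      ≤ m * exp (ℓ - ε * n / 2) := by
        gcongr
        exact htail.trans (two_pow_mul_one_sub_half_pow_le_exp (by linarith) ℓ n)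
    _ ≤ m * (β / m) := by
        gcongr
        rwa [← exp_le_exp, exp_log (by positivity)] at hexponent
    _ = β := mul_div_cancel₀ β hm.ne'
end

section
/- Let X be a compact subset of R^q and φ : X × S → ℝ a function on X times a measurable space S such that φ(·, s) is L-Lipschitz for every s (with respect to a norm on R^q) and φ is uniformly bounded. If x_1, x_2, ... are i.i.d. S-valued random variables, then the uniform empirical error e_n := sup_{θ ∈ X} ( (1/n) Σ_{i=1}^n φ(θ, x_i) − E[φ(θ, x_1)] ) converges to 0 almost surely as n → ∞. -/
/-!
For each fixed `θ` the strong law of large numbers makes the empirical mean of `φ θ` converge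
almost surely to its expectation; on a countable dense subset `D` of the compact set `X` this
holds simultaneously for almost every `ω`. Both the empirical means and the expectation are
`L`-Lipschitz in `θ`, and an equi-Lipschitz family converging on a dense subset of a compact set
converges uniformly on it (compare on a finite `δ`-net of points of `D`). Uniform convergence
forces the supremum of the error to `0`.
-/

open MeasureTheory Filter Topology ProbabilityTheory
open scoped NNReal

lemma Real.abs_sSup_le {s : Set ℝ} {a : ℝ} (hs : ∀ x ∈ s, |x| ≤ a) (ha : 0 ≤ a) :
    |sSup s| ≤ a := by
  refine abs_le.2 ⟨?_, Real.sSup_le (fun x hx => (abs_le.1 (hs x hx)).2) ha⟩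
  rcases s.eq_empty_or_nonempty with rfl | ⟨x, hx⟩
  · simpa [Real.sSup_empty] using ha
  · exact (abs_le.1 (hs x hx)).1.trans
      (le_csSup ⟨a, fun y hy => (abs_le.1 (hs y hy)).2⟩ hx)

lemma TendstoUniformlyOn.tendsto_sSup_image_sub {ι α : Type*} {l : Filter ι}
    {F : ι → α → ℝ} {f : α → ℝ} {X : Set α} (h : TendstoUniformlyOn F f l X) :
    Tendsto (fun n => sSup ((fun θ => F n θ - f θ) '' X)) l (𝓝 0) := by
  refine Metric.tendsto_nhds.2 fun ε hε => ?_
  filter_upwards [Metric.tendstoUniformlyOn_iff.1 h (ε / 2) (half_pos hε)] with n hn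
  rw [Real.dist_0_eq_abs]
  refine (Real.abs_sSup_le ?_ (half_pos hε).le).trans_lt (half_lt_self hε)
  rintro _ ⟨θ, hθ, rfl⟩
  rw [abs_sub_comm, ← Real.dist_eq]
  exact (hn θ hθ).le

theorem tendstoUniformlyOn_of_tendsto_of_lipschitzOnWith {ι α β : Type*} [PseudoMetricSpace α]
    [PseudoMetricSpace β] {l : Filter ι} {F : ι → α → β} {f : α → β} {X D : Set α} {K : ℝ≥0}
    (hX : IsCompact X) (hDX : D ⊆ X) (hXD : X ⊆ closure D)
    (hF : ∀ n, LipschitzOnWith K (F n) X) (hf : LipschitzOnWith K f X)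
    (hlim : ∀ d ∈ D, Tendsto (fun n => F n d) l (𝓝 (f d))) :
    TendstoUniformlyOn F f l X := by
  refine Metric.tendstoUniformlyOn_iff.2 fun ε hε => ?_
  obtain ⟨δ, hδ, hKδ⟩ := exists_pos_mul_lt (div_pos hε three_pos) K
  have hcover : X ⊆ ⋃ d ∈ D, Metric.ball d δ := fun θ hθ => by
    obtain ⟨d, hd, hθd⟩ := Metric.mem_closure_iff.1 (hXD hθ) δ hδ
    exact Set.mem_iUnion₂.2 ⟨d, hd, hθd⟩
  obtain ⟨T, hTD, hTfin, hXT⟩ :=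
    hX.elim_finite_subcover_image (fun _ _ => Metric.isOpen_ball) hcover
  have hnet : ∀ᶠ n in l, ∀ d ∈ T, dist (f d) (F n d) < ε / 3 :=
    hTfin.eventually_all.2 fun d hd =>
      (Metric.tendsto_nhds.1 (hlim d (hTD hd)) _ (div_pos hε three_pos)).mono
        fun n hn => by rwa [dist_comm]
  filter_upwards [hnet] with n hn θ hθ
  obtain ⟨d, hdT, hθd⟩ := Set.mem_iUnion₂.1 (hXT hθ)
  have hdX : d ∈ X := hDX (hTD hdT)
  have hlip : ∀ g : α → β, LipschitzOnWith K g X → dist (g θ) (g d) < ε / 3 := fun g hg =>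
    (hg.dist_le_mul θ hθ d hdX).trans_lt <|
      (mul_le_mul_of_nonneg_left (Metric.mem_ball.1 hθd).le K.2).trans_lt hKδ
  calc dist (f θ) (F n θ)
      ≤ dist (f θ) (f d) + dist (f d) (F n d) + dist (F n d) (F n θ) := dist_triangle4 _ _ _ _
    _ < ε / 3 + ε / 3 + ε / 3 := by
        gcongr
        · exact hlip f hf
        · exact hn d hdT
        · rw [dist_comm]; exact hlip (F n) (hF n)
    _ = ε := by ring

lemma LipschitzOnWith.mean {α : Type*} [PseudoMetricSpace α] {X : Set α} {K : ℝ≥0}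
    {f : ℕ → α → ℝ} (hf : ∀ i, LipschitzOnWith K (f i) X) (n : ℕ) :
    LipschitzOnWith K (fun θ => (1 / (n : ℝ)) * ∑ i ∈ Finset.range n, f i θ) X := by
  refine LipschitzOnWith.of_dist_le_mul fun θ hθ θ' hθ' => ?_
  rcases Nat.eq_zero_or_pos n with rfl | hn
  · simpa using mul_nonneg K.2 dist_nonneg
  have hsum : |∑ i ∈ Finset.range n, (f i θ - f i θ')| ≤ n * (K * dist θ θ') := by
    calc |∑ i ∈ Finset.range n, (f i θ - f i θ')|
        ≤ ∑ i ∈ Finset.range n, |f i θ - f i θ'| := Finset.abs_sum_le_sum_abs _ _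
      _ ≤ ∑ _i ∈ Finset.range n, K * dist θ θ' :=
          Finset.sum_le_sum fun i _ => (hf i).dist_le_mul θ hθ θ' hθ'
      _ = n * (K * dist θ θ') := by simp
  rw [Real.dist_eq, ← mul_sub, ← Finset.sum_sub_distrib, abs_mul, abs_of_pos (by positivity),
    one_div_mul_eq_div, div_le_iff₀ (by positivity), mul_comm]
  exact hsum

lemma LipschitzOnWith.integral {α Ω : Type*} [PseudoMetricSpace α] [MeasurableSpace Ω]
    {μ : Measure Ω} [IsProbabilityMeasure μ] {X : Set α} {K : ℝ≥0} {ψ : α → Ω → ℝ}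
    (hint : ∀ θ ∈ X, Integrable (ψ θ) μ) (hψ : ∀ ω, LipschitzOnWith K (ψ · ω) X) :
    LipschitzOnWith K (fun θ => ∫ ω, ψ θ ω ∂μ) X := by
  refine LipschitzOnWith.of_dist_le_mul fun θ hθ θ' hθ' => ?_
  rw [dist_eq_norm, ← integral_sub (hint θ hθ) (hint θ' hθ')]
  have hpt : ∀ ω, ‖ψ θ ω - ψ θ' ω‖ ≤ K * dist θ θ' := fun ω => by
    rw [← dist_eq_norm]; exact (hψ ω).dist_le_mul θ hθ θ' hθ'
  simpa using norm_integral_le_of_norm_le_const (μ := μ) (ae_of_all _ hpt)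

theorem ProbabilityTheory.strong_law_ae_real_comp {Ω S : Type*} [MeasurableSpace Ω]
    [MeasurableSpace S] {μ : Measure Ω} {x : ℕ → Ω → S} (hindep : iIndepFun x μ)
    (hident : ∀ i, IdentDistrib (x i) (x 0) μ μ) {g : S → ℝ} (hg : Measurable g)
    (hint : Integrable (fun ω => g (x 0 ω)) μ) :
    ∀ᵐ ω ∂μ, Tendsto (fun n : ℕ => (1 / (n : ℝ)) * ∑ i ∈ Finset.range n, g (x i ω)) atTop
      (𝓝 (∫ ω, g (x 0 ω) ∂μ)) := by
  have h := strong_law_ae_real (fun i ω => g (x i ω)) hint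
    (fun i j hij => (hindep.indepFun hij).comp hg hg) fun i => (hident i).comp hg
  simpa only [one_div_mul_eq_div] using h

theorem stmt_19_general (q : ℕ) (S : Type*) [MeasurableSpace S]
    (Ω : Type*) [MeasurableSpace Ω] (μ : Measure Ω) [IsProbabilityMeasure μ]
    (x : ℕ → Ω → S)
    (hindep : ProbabilityTheory.iIndepFun x μ)
    (hident : ∀ i, ProbabilityTheory.IdentDistrib (x i) (x 0) μ μ)
    (X : Set (Fin q → ℝ)) (hX : IsCompact X)
    (φ : (Fin q → ℝ) → S → ℝ) (L M : ℝ)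
    (hφmeas : ∀ θ, Measurable (φ θ))
    (hφbdd : ∀ θ s, |φ θ s| ≤ M)
    (hφLip : ∀ s : S, ∀ θ ∈ X, ∀ θ' ∈ X, |φ θ s - φ θ' s| ≤ L * ‖θ - θ'‖)
    (e : ℕ → Ω → ℝ)
    (he : ∀ n ω, e n ω = sSup ((fun θ =>
      (1 / (n : ℝ)) * ∑ i ∈ Finset.range n, φ θ (x i ω) -
        ∫ ω', φ θ (x 0 ω') ∂μ) '' X)) :
    ∀ᵐ ω ∂μ, Tendsto (fun n => e n ω) atTop (nhds 0) := by
  have hLip : ∀ s, LipschitzOnWith L.toNNReal (φ · s) X := fun s =>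
    LipschitzOnWith.of_dist_le_mul fun θ hθ θ' hθ' => by
      rw [Real.dist_eq, dist_eq_norm, Real.coe_toNNReal']
      exact (hφLip s θ hθ θ' hθ').trans (by gcongr; exact le_max_left L 0)
  have hint : ∀ θ, Integrable (fun ω => φ θ (x 0 ω)) μ := fun θ =>
    .of_bound ((hφmeas θ).comp_aemeasurable (hident 0).aemeasurable_fst).aestronglyMeasurable M
      (ae_of_all _ fun ω => hφbdd θ (x 0 ω))
  obtain ⟨D, hDX, hDc, hXD⟩ := hX.isSeparable.exists_countable_dense_subset
  have hslln : ∀ᵐ ω ∂μ, ∀ θ ∈ D, Tendsto (fun n : ℕ => (1 / (n : ℝ)) *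
      ∑ i ∈ Finset.range n, φ θ (x i ω)) atTop (𝓝 (∫ ω', φ θ (x 0 ω') ∂μ)) :=
    (ae_ball_iff hDc).2 fun θ _ => strong_law_ae_real_comp hindep hident (hφmeas θ) (hint θ)
  filter_upwards [hslln] with ω hω
  simp only [he]
  exact TendstoUniformlyOn.tendsto_sSup_image_sub <|
    tendstoUniformlyOn_of_tendsto_of_lipschitzOnWith hX hDX hXD
      (LipschitzOnWith.mean fun i => hLip (x i ω))
      (LipschitzOnWith.integral (fun θ _ => hint θ) fun ω' => hLip (x 0 ω')) hω

theorem stmt_19 (q : ℕ) (S : Type*) [MeasurableSpace S]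
    (Ω : Type*) [MeasurableSpace Ω] (μ : Measure Ω) [IsProbabilityMeasure μ]
    (x : ℕ → Ω → S) (hmeas : ∀ i, Measurable (x i))
    (hindep : ProbabilityTheory.iIndepFun x μ)
    (hident : ∀ i, ProbabilityTheory.IdentDistrib (x i) (x 0) μ μ)
    (X : Set (Fin q → ℝ)) (hX : IsCompact X)
    (φ : (Fin q → ℝ) → S → ℝ) (L M : ℝ)
    (hφmeas : ∀ θ, Measurable (φ θ))
    (hφbdd : ∀ θ s, |φ θ s| ≤ M)
    (hφLip : ∀ s : S, ∀ θ ∈ X, ∀ θ' ∈ X, |φ θ s - φ θ' s| ≤ L * ‖θ - θ'‖)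
    (e : ℕ → Ω → ℝ)
    (he : ∀ n ω, e n ω = sSup ((fun θ =>
      (1 / (n : ℝ)) * ∑ i ∈ Finset.range n, φ θ (x i ω) -
        ∫ ω', φ θ (x 0 ω') ∂μ) '' X)) :
    ∀ᵐ ω ∂μ, Tendsto (fun n => e n ω) atTop (nhds 0) :=
  stmt_19_general q S Ω μ x hindep hident X hX φ L M hφmeas hφbdd hφLip e he
end
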